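/- arXiv:2109.14385 — 2 statements merged into one kernel-verified Lean document; each statement's English description precedes it below -/
import Mathlib

section
/- Let x_h : ℝ → ℝ^m be a C² solution of the uphill equation ẍ_h − Γẋ_h + ∇V(x_h) = 0 with Γ symmetric positive definite, satisfying x_h(−∞)=x_a, x_h(+∞)=x_u and ẋ_h(±∞)=0, where the improper integrals below converge. Then the Freidlin–Wentzell action S[x_h] = (1/2)∫_{−∞}^{∞} ‖ẍ_h + Γẋ_h + ∇V(x_h)‖²_{Γ⁻¹} dt equals 2(V(x_u) − V(x_a)). -/
open Matrix MeasureTheory Filter Topology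

/-- The Euclidean gradient of `V : ℝ^m → ℝ`. -/
noncomputable def gradV {m : ℕ} (V : (Fin m → ℝ) → ℝ) (y : Fin m → ℝ) : Fin m → ℝ :=
  fun i => fderiv ℝ V y (Pi.single i 1)

lemma gradV_dot {m : ℕ} (V : (Fin m → ℝ) → ℝ) (y v : Fin m → ℝ) :
    gradV V y ⬝ᵥ v = fderiv ℝ V y v := by
  conv_rhs => rw [show v = ∑ i, Pi.single i (v i) from (Finset.univ_sum_single v).symm]
  rw [map_sum]
  simp only [dotProduct, gradV]
  refine Finset.sum_congr rfl fun i _ => ?_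
  have h : (Pi.single i (v i) : Fin m → ℝ) = v i • (Pi.single i (1:ℝ) : Fin m → ℝ) := by
    ext j
    rw [Pi.smul_apply, Pi.single_apply, Pi.single_apply, smul_eq_mul, mul_ite, mul_one, mul_zero]
  rw [h, (fderiv ℝ V y).map_smul, smul_eq_mul, mul_comm]

/-- the Freidlin–Wentzell action of an uphill heteroclinic
`ẍ − Γẋ + ∇V(x) = 0` from `x_a` (as `t → −∞`) to `x_u` (as `t → +∞`),
with vanishing velocities at `±∞`, equals `2(V(x_u) − V(x_a))`. -/
theorem uphill_action_value (m : ℕ) (Γ : Matrix (Fin m) (Fin m) ℝ)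
    (hΓ : Γ.PosDef) (hΓsymm : Γ.IsSymm)
    (V : (Fin m → ℝ) → ℝ) (hV : ContDiff ℝ 1 V)
    (x : ℝ → (Fin m → ℝ)) (hx : ContDiff ℝ 2 x)
    (xa xu : Fin m → ℝ)
    (heq : ∀ t, deriv (deriv x) t - Γ.mulVec (deriv x t) + gradV V (x t) = 0)
    (hbot : Tendsto x atBot (𝓝 xa)) (htop : Tendsto x atTop (𝓝 xu))
    (hvbot : Tendsto (deriv x) atBot (𝓝 0)) (hvtop : Tendsto (deriv x) atTop (𝓝 0))
    (hint : Integrable (fun t =>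
      (deriv (deriv x) t + Γ.mulVec (deriv x t) + gradV V (x t)) ⬝ᵥ
        Γ⁻¹.mulVec (deriv (deriv x) t + Γ.mulVec (deriv x t) + gradV V (x t)))) :
    (1 / 2) * ∫ t : ℝ,
        (deriv (deriv x) t + Γ.mulVec (deriv x t) + gradV V (x t)) ⬝ᵥ
          Γ⁻¹.mulVec (deriv (deriv x) t + Γ.mulVec (deriv x t) + gradV V (x t))
      = 2 * (V xu - V xa) := by
  -- basic differentiability
  have hx' : ContDiff ℝ (1+1) x := by norm_num; exact hx
  have hxdiff : Differentiable ℝ x := (contDiff_succ_iff_deriv.mp hx').1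
  have hddiff : Differentiable ℝ (deriv x) :=
    ((contDiff_succ_iff_deriv.mp hx').2.2).differentiable one_ne_zero
  have hΓunit : IsUnit Γ.det := isUnit_iff_ne_zero.mpr hΓ.det_pos.ne'
  -- the ODE rearranged
  have h1 : ∀ t, deriv (deriv x) t + gradV V (x t) = Γ.mulVec (deriv x t) := by
    intro t
    have h := heq t
    rwa [sub_add_eq_add_sub, sub_eq_zero] at h
  -- pointwise identity for the integrand
  have key : ∀ t,
      (deriv (deriv x) t + Γ.mulVec (deriv x t) + gradV V (x t)) ⬝ᵥ
        Γ⁻¹.mulVec (deriv (deriv x) t + Γ.mulVec (deriv x t) + gradV V (x t))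
      = 4 * (deriv x t ⬝ᵥ (deriv (deriv x) t + gradV V (x t))) := by
    intro t
    have h2 : deriv (deriv x) t + Γ.mulVec (deriv x t) + gradV V (x t)
        = Γ.mulVec (deriv x t + deriv x t) := by
      rw [add_right_comm, h1 t, Matrix.mulVec_add]
    rw [h2, h1 t, Matrix.mulVec_mulVec, Matrix.nonsing_inv_mul Γ hΓunit, Matrix.one_mulVec]
    simp only [Matrix.mulVec_add, add_dotProduct, dotProduct_add]
    rw [dotProduct_comm]
    ring
  -- the primitive
  set F : ℝ → ℝ := fun t => 2 * (deriv x t ⬝ᵥ deriv x t) + 4 * V (x t) with hF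
  have hderiv : ∀ t, HasDerivAt F
      (4 * (deriv x t ⬝ᵥ (deriv (deriv x) t + gradV V (x t)))) t := by
    intro t
    have hdAt : HasDerivAt (deriv x) (deriv (deriv x) t) t :=
      (hddiff t).hasDerivAt
    have hxAt : HasDerivAt x (deriv x t) t := (hxdiff t).hasDerivAt
    have hcomp : ∀ i : Fin m, HasDerivAt (fun s => deriv x s i)
        (deriv (deriv x) t i) t := fun i => hasDerivAt_pi.mp hdAt i
    have hdot : HasDerivAt (fun s => deriv x s ⬝ᵥ deriv x s)
        (deriv (deriv x) t ⬝ᵥ deriv x t + deriv x t ⬝ᵥ deriv (deriv x) t) t := by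
      have := HasDerivAt.fun_sum (fun i (_ : i ∈ Finset.univ) => (hcomp i).fun_mul (hcomp i))
      simpa [dotProduct, Finset.sum_add_distrib] using this
    have hVAt : HasDerivAt (fun s => V (x s)) (fderiv ℝ V (x t) (deriv x t)) t :=
      ((hV.differentiable one_ne_zero (x t)).hasFDerivAt).comp_hasDerivAt t hxAt
    have := (hdot.const_mul (2:ℝ)).fun_add (hVAt.const_mul (4:ℝ))
    refine this.congr_deriv (Eq.symm ?_)
    rw [← gradV_dot]
    simp only [dotProduct_add]
    rw [dotProduct_comm (gradV V (x t)) (deriv x t),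
      dotProduct_comm (deriv (deriv x) t) (deriv x t)]
    ring
  -- continuity of v ↦ v ⬝ᵥ v
  have hcont : Continuous fun v : Fin m → ℝ => v ⬝ᵥ v := by
    simp only [dotProduct]
    exact continuous_finset_sum _ fun i _ => (continuous_apply i).mul (continuous_apply i)
  -- limits of F
  have hFtop : Tendsto F atTop (𝓝 (4 * V xu)) := by
    have h1 : Tendsto (fun t => deriv x t ⬝ᵥ deriv x t) atTop (𝓝 ((0:Fin m → ℝ) ⬝ᵥ 0)) :=
      (hcont.tendsto 0).comp hvtop
    have h2 : Tendsto (fun t => V (x t)) atTop (𝓝 (V xu)) :=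
      ((hV.continuous.tendsto xu).comp htop)
    have := (h1.const_mul (2:ℝ)).add (h2.const_mul (4:ℝ))
    simpa using this
  have hFbot : Tendsto F atBot (𝓝 (4 * V xa)) := by
    have h1 : Tendsto (fun t => deriv x t ⬝ᵥ deriv x t) atBot (𝓝 ((0:Fin m → ℝ) ⬝ᵥ 0)) :=
      (hcont.tendsto 0).comp hvbot
    have h2 : Tendsto (fun t => V (x t)) atBot (𝓝 (V xa)) :=
      ((hV.continuous.tendsto xa).comp hbot)
    have := (h1.const_mul (2:ℝ)).add (h2.const_mul (4:ℝ))
    simpa using this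
  -- integrability of the rewritten integrand
  have hint' : Integrable (fun t => 4 * (deriv x t ⬝ᵥ (deriv (deriv x) t + gradV V (x t)))) :=
    (funext key : _) ▸ hint
  have hmain : ∫ t : ℝ, 4 * (deriv x t ⬝ᵥ (deriv (deriv x) t + gradV V (x t)))
      = 4 * V xu - 4 * V xa :=
    integral_of_hasDerivAt_of_tendsto hderiv hint' hFbot hFtop
  calc (1 / 2) * ∫ t : ℝ,
        (deriv (deriv x) t + Γ.mulVec (deriv x t) + gradV V (x t)) ⬝ᵥ
          Γ⁻¹.mulVec (deriv (deriv x) t + Γ.mulVec (deriv x t) + gradV V (x t))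
      = (1 / 2) * ∫ t : ℝ, 4 * (deriv x t ⬝ᵥ (deriv (deriv x) t + gradV V (x t))) := by
        congr 1
        exact integral_congr_ae (Eventually.of_forall key)
    _ = 2 * (V xu - V xa) := by rw [hmain]; ring
end

section
/- Let (q₁,q₂,p₁,p₂) solve Hamilton's equations q̇₁=q₂, q̇₂ = Γp₂ − Γq₂ − ∇V(q₁) + εf(q₁,t), ṗ₁ = (D∇V(q₁))ᵀp₂ − ε(Df(q₁,t))ᵀp₂, ṗ₂ = Γp₂ − p₁, with Γ symmetric positive definite. Then x(t) := q₁(t) is C⁴ and satisfies the fourth-order Euler–Lagrange equation of L(t;x,ẋ,ẍ) = (1/2)‖ẍ + Γẋ + ∇V(x) − εf(x,t)‖²_{Γ⁻¹}, namely ∂L/∂x − d/dt(∂L/∂ẋ) + d²/dt²(∂L/∂ẍ) = 0. -/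
open Matrix

/-- The Hessian matrix `D∇V` of `V`. -/
noncomputable def hessV {m : ℕ} (V : (Fin m → ℝ) → ℝ) (y : Fin m → ℝ) :
    Matrix (Fin m) (Fin m) ℝ :=
  fun i j => fderiv ℝ (fun u => gradV V u i) y (Pi.single j 1)

/-- The Jacobian matrix in `x` of the forcing `f(x,t)`. -/
noncomputable def jacF {m : ℕ} (f : (Fin m → ℝ) → ℝ → (Fin m → ℝ))
    (y : Fin m → ℝ) (t : ℝ) : Matrix (Fin m) (Fin m) ℝ :=
  fun i j => fderiv ℝ (fun u => f u t i) y (Pi.single j 1)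

/-- The Freidlin–Wentzell Lagrangian
`L(t;x,ẋ,ẍ) = (1/2)‖ẍ + Γẋ + ∇V(x) − εf(x,t)‖²_{Γ⁻¹}`. -/
noncomputable def FWLagrangian {m : ℕ} (Γ : Matrix (Fin m) (Fin m) ℝ)
    (V : (Fin m → ℝ) → ℝ) (f : (Fin m → ℝ) → ℝ → (Fin m → ℝ)) (ε : ℝ)
    (t : ℝ) (x v w : Fin m → ℝ) : ℝ :=
  (1 / 2) * ((w + Γ.mulVec v + gradV V x - ε • f x t) ⬝ᵥ
    Γ⁻¹.mulVec (w + Γ.mulVec v + gradV V x - ε • f x t))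

variable {m : ℕ}

/-- `mulVec` as a continuous linear map. -/
noncomputable def mvCLM (A : Matrix (Fin m) (Fin m) ℝ) : (Fin m → ℝ) →L[ℝ] (Fin m → ℝ) :=
  LinearMap.toContinuousLinearMap A.mulVecLin

@[simp] lemma mvCLM_apply (A : Matrix (Fin m) (Fin m) ℝ) (v : Fin m → ℝ) :
    mvCLM A v = A.mulVec v := rfl

/-- `y ↦ (h ↦ h ⬝ᵥ y)` as a continuous linear map into the dual. -/
noncomputable def dotCLM : (Fin m → ℝ) →L[ℝ] ((Fin m → ℝ) →L[ℝ] ℝ) :=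
  LinearMap.toContinuousLinearMap
  { toFun := fun y => LinearMap.toContinuousLinearMap
      { toFun := fun h => h ⬝ᵥ y
        map_add' := fun a b => by simp [add_dotProduct]
        map_smul' := fun c a => by simp [smul_dotProduct] }
    map_add' := fun a b => by ext h; simp [dotProduct_add]
    map_smul' := fun c a => by ext h; simp [dotProduct_smul] }

@[simp] lemma dotCLM_apply (y h : Fin m → ℝ) : dotCLM y h = h ⬝ᵥ y := rfl

lemma dotCLM_comp_mvCLM (A : Matrix (Fin m) (Fin m) ℝ) (y : Fin m → ℝ) :
    (dotCLM y).comp (mvCLM A) = dotCLM (Aᵀ.mulVec y) := by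
  ext h
  simp [Matrix.dotProduct_mulVec, Matrix.mulVec_transpose, dotProduct_comm]

lemma mvCLM_sub_smul (A B : Matrix (Fin m) (Fin m) ℝ) (ε : ℝ) :
    mvCLM (A - ε • B) = mvCLM A - ε • mvCLM B := by
  ext h
  simp [Matrix.sub_mulVec, Matrix.smul_mulVec]

/-- derivative of the half quadratic form along a differentiable map. -/
lemma hasFDerivAt_half_quad {A : Matrix (Fin m) (Fin m) ℝ} (hA : Aᵀ = A)
    {g : (Fin m → ℝ) → (Fin m → ℝ)} {G : (Fin m → ℝ) →L[ℝ] (Fin m → ℝ)}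
    {x : Fin m → ℝ} (hg : HasFDerivAt g G x) :
    HasFDerivAt (fun u => (1 / 2 : ℝ) * (g u ⬝ᵥ A.mulVec (g u)))
      ((dotCLM (A.mulVec (g x))).comp G) x := by
  have hc : HasFDerivAt (fun u => dotCLM (A.mulVec (g u)))
      ((dotCLM.comp (mvCLM A)).comp G) x := by
    exact ((dotCLM.comp (mvCLM A)).hasFDerivAt).comp x hg
  have h := (hc.clm_apply hg).const_mul (1 / 2 : ℝ)
  refine h.congr_fderiv ?_
  ext h'
  have key : G h' ⬝ᵥ A.mulVec (g x) = g x ⬝ᵥ A.mulVec (G h') := by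
    rw [Matrix.dotProduct_mulVec, ← Matrix.mulVec_transpose, hA, dotProduct_comm]
  simp only [ContinuousLinearMap.coe_comp', Function.comp_apply, dotCLM_apply,
    ContinuousLinearMap.add_apply, ContinuousLinearMap.coe_smul', Pi.smul_apply,
    ContinuousLinearMap.flip_apply, ContinuousLinearMap.comp_apply, mvCLM_apply,
    ContinuousLinearMap.smul_apply]
  rw [key, smul_eq_mul]
  ring

/-- A differentiable map `ℝ^m → ℝ^m` has fderiv given by its Jacobian matrix. -/
lemma hasFDerivAt_jacobian {g : (Fin m → ℝ) → (Fin m → ℝ)} {y : Fin m → ℝ}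
    (hg : DifferentiableAt ℝ g y) :
    HasFDerivAt g (mvCLM (fun i j => fderiv ℝ (fun u => g u i) y (Pi.single j 1))) y := by
  have h := hg.hasFDerivAt
  convert h using 1
  have hcomp : ∀ i, fderiv ℝ (fun u => g u i) y =
      (ContinuousLinearMap.proj i).comp (fderiv ℝ g y) := by
    intro i
    exact (((ContinuousLinearMap.proj i).hasFDerivAt).comp y h).fderiv
  ext h' k
  show Matrix.mulVec (fun i j => fderiv ℝ (fun u => g u i) y (Pi.single j 1)) h' k = _
  unfold Matrix.mulVec
  simp only [dotProduct, hcomp]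
  have hx : h' = ∑ j, h' j • (Pi.single j 1 : Fin m → ℝ) := by
    ext j; simp [Pi.single_apply, Finset.sum_apply]
  conv_rhs => rw [hx]
  rw [map_sum]
  simp [mul_comm]

lemma fderiv_component {g : (Fin m → ℝ) → (Fin m → ℝ)} {y : Fin m → ℝ}
    (hg : DifferentiableAt ℝ g y) (i : Fin m) (v : Fin m → ℝ) :
    fderiv ℝ (fun u => g u i) y v = (fderiv ℝ g y) v i := by
  have h : HasFDerivAt (fun u => g u i)
      ((ContinuousLinearMap.proj (R := ℝ) (φ := fun _ : Fin m => ℝ) i).comp (fderiv ℝ g y)) y :=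
    ((ContinuousLinearMap.proj (R := ℝ) (φ := fun _ : Fin m => ℝ) i).hasFDerivAt).comp
      y hg.hasFDerivAt
  rw [h.fderiv]
  rfl

section smooth
variable {V : (Fin m → ℝ) → ℝ} {f : (Fin m → ℝ) → ℝ → (Fin m → ℝ)}

lemma gradV_contDiff (hV : ContDiff ℝ 3 V) : ContDiff ℝ 2 (fun y => gradV V y) := by
  apply contDiff_pi.2
  intro i
  exact (hV.fderiv_right (by norm_num)).clm_apply contDiff_const

lemma hessV_contDiff (hV : ContDiff ℝ 3 V) (i j : Fin m) :
    ContDiff ℝ 1 (fun y => hessV V y i j) := by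
  have h1 : ContDiff ℝ 2 (fun y => gradV V y i) :=
    (contDiff_pi.1 (gradV_contDiff hV)) i
  exact (h1.fderiv_right (by norm_num)).clm_apply contDiff_const

lemma f_slice_contDiff (hf : ContDiff ℝ 2 (fun p : (Fin m → ℝ) × ℝ => f p.1 p.2)) (t : ℝ) :
    ContDiff ℝ 2 (fun u => f u t) :=
  hf.comp (contDiff_id.prodMk contDiff_const)

/-- joint regularity of the Jacobian of `f`. -/
lemma jacF_contDiff (hf : ContDiff ℝ 2 (fun p : (Fin m → ℝ) × ℝ => f p.1 p.2)) (i j : Fin m) :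
    ContDiff ℝ 1 (fun p : (Fin m → ℝ) × ℝ => jacF f p.1 p.2 i j) := by
  have h1 : ContDiff ℝ 1 (fun p : (Fin m → ℝ) × ℝ =>
      fderiv ℝ (fun u => f u p.2) p.1) := by
    apply ContDiff.fderiv (f := fun (p : (Fin m → ℝ) × ℝ) (u : Fin m → ℝ) => f u p.2)
      (g := fun p => p.1) (m := 2)
    · exact hf.comp ((contDiff_snd).prodMk (contDiff_snd.comp contDiff_fst))
    · exact contDiff_fst
    · norm_num
  have h2 : ContDiff ℝ 1 (fun p : (Fin m → ℝ) × ℝ =>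
      (fderiv ℝ (fun u => f u p.2) p.1) (Pi.single j 1) i) :=
    contDiff_pi.1 (h1.clm_apply contDiff_const) i
  convert h2 using 2 with p
  show jacF f p.1 p.2 i j = _
  rw [jacF, fderiv_component ((f_slice_contDiff hf p.2).differentiable (by norm_num) p.1)]

end smooth

lemma contDiff_matVec {n : ℕ} {M : ℝ → Matrix (Fin m) (Fin m) ℝ} {v : ℝ → Fin m → ℝ}
    (hM : ∀ i j, ContDiff ℝ n (fun t => M t i j)) (hv : ContDiff ℝ n v) :
    ContDiff ℝ n (fun t => (M t).mulVec (v t)) := by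
  apply contDiff_pi.2
  intro i
  have : (fun t => (M t).mulVec (v t) i) = fun t => ∑ j, M t i j * v t j := by
    funext t; rfl
  rw [this]
  exact ContDiff.sum fun j _ => (hM i j).mul ((contDiff_pi.1 hv) j)

lemma hasFDerivAt_gradV {V : (Fin m → ℝ) → ℝ} (hV : ContDiff ℝ 3 V) (y : Fin m → ℝ) :
    HasFDerivAt (fun u => gradV V u) (mvCLM (hessV V y)) y :=
  hasFDerivAt_jacobian ((gradV_contDiff hV).differentiable (by norm_num) y)

lemma hasFDerivAt_fslice {f : (Fin m → ℝ) → ℝ → (Fin m → ℝ)}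
    (hf : ContDiff ℝ 2 (fun p : (Fin m → ℝ) × ℝ => f p.1 p.2)) (t : ℝ) (y : Fin m → ℝ) :
    HasFDerivAt (fun u => f u t) (mvCLM (jacF f y t)) y :=
  hasFDerivAt_jacobian (((f_slice_contDiff hf t)).differentiable (by norm_num) y)


/-- a solution of the Ostrogradsky Hamilton equations projects,
via `x := q₁`, to a C⁴ solution of the fourth-order Euler–Lagrange equation
`∂L/∂x − d/dt(∂L/∂ẋ) + d²/dt²(∂L/∂ẍ) = 0` of the Freidlin–Wentzell
Lagrangian. -/
theorem hamilton_to_euler_lagrange (m : ℕ) (Γ : Matrix (Fin m) (Fin m) ℝ)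
    (hΓ : Γ.PosDef) (hΓsymm : Γ.IsSymm)
    (V : (Fin m → ℝ) → ℝ) (hV : ContDiff ℝ 3 V)
    (f : (Fin m → ℝ) → ℝ → (Fin m → ℝ))
    (hf : ContDiff ℝ 2 (fun p : (Fin m → ℝ) × ℝ => f p.1 p.2))
    (ε : ℝ) (q₁ q₂ p₁ p₂ : ℝ → (Fin m → ℝ))
    (h1 : ∀ t, HasDerivAt q₁ (q₂ t) t)
    (h2 : ∀ t, HasDerivAt q₂
      (Γ.mulVec (p₂ t) - Γ.mulVec (q₂ t) - gradV V (q₁ t) + ε • f (q₁ t) t) t)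
    (h3 : ∀ t, HasDerivAt p₁
      ((hessV V (q₁ t))ᵀ.mulVec (p₂ t) - ε • (jacF f (q₁ t) t)ᵀ.mulVec (p₂ t)) t)
    (h4 : ∀ t, HasDerivAt p₂ (Γ.mulVec (p₂ t) - p₁ t) t) :
    ContDiff ℝ 4 q₁ ∧
    ∀ t : ℝ,
      (fderiv ℝ (fun u =>
          FWLagrangian Γ V f ε t u (deriv q₁ t) (deriv (deriv q₁) t)) (q₁ t))
        - deriv (fun s => fderiv ℝ (fun v =>
            FWLagrangian Γ V f ε s (q₁ s) v (deriv (deriv q₁) s)) (deriv q₁ s)) t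
        + deriv (deriv (fun s => fderiv ℝ (fun w =>
            FWLagrangian Γ V f ε s (q₁ s) (deriv q₁ s) w) (deriv (deriv q₁) s))) t
      = 0 := by
  -- basic derivative identities
  have hderiv_q1 : deriv q₁ = q₂ := funext fun t => (h1 t).deriv
  have hderiv_q2 : deriv q₂ = fun t =>
      Γ.mulVec (p₂ t) - Γ.mulVec (q₂ t) - gradV V (q₁ t) + ε • f (q₁ t) t :=
    funext fun t => (h2 t).deriv
  have hderiv_p2 : deriv p₂ = fun t => Γ.mulVec (p₂ t) - p₁ t :=
    funext fun t => (h4 t).deriv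
  -- regularity building blocks
  have hgrad2 := gradV_contDiff hV
  have hq1d : Differentiable ℝ q₁ := fun t => (h1 t).differentiableAt
  have hq2d : Differentiable ℝ q₂ := fun t => (h2 t).differentiableAt
  have hp1d : Differentiable ℝ p₁ := fun t => (h3 t).differentiableAt
  have hp2d : Differentiable ℝ p₂ := fun t => (h4 t).differentiableAt
  have hq1c0 : ContDiff ℝ 0 q₁ :=
    contDiff_zero.2 hq1d.continuous
  have hq2c0 : ContDiff ℝ 0 q₂ :=
    contDiff_zero.2 hq2d.continuous
  have hp1c0 : ContDiff ℝ 0 p₁ :=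
    contDiff_zero.2 hp1d.continuous
  have hp2c0 : ContDiff ℝ 0 p₂ :=
    contDiff_zero.2 hp2d.continuous
  -- the rhs of h2 has regularity min (n q₁/q₂/p₂, 2)
  have hexp : ∀ n : ℕ, (n : WithTop ℕ∞) ≤ 2 → ContDiff ℝ n q₁ → ContDiff ℝ n q₂ →
      ContDiff ℝ n p₂ → ContDiff ℝ n (fun t =>
        Γ.mulVec (p₂ t) - Γ.mulVec (q₂ t) - gradV V (q₁ t) + ε • f (q₁ t) t) := by
    intro n hn hq1 hq2 hp2
    have t1 : ContDiff ℝ n (fun t => Γ.mulVec (p₂ t)) := (mvCLM Γ).contDiff.comp hp2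
    have t2 : ContDiff ℝ n (fun t => Γ.mulVec (q₂ t)) := (mvCLM Γ).contDiff.comp hq2
    have t3 : ContDiff ℝ n (fun t => gradV V (q₁ t)) := (hgrad2.of_le hn).comp hq1
    have t4 : ContDiff ℝ n (fun t => f (q₁ t) t) :=
      (hf.of_le hn).comp (hq1.prodMk contDiff_id)
    exact ((t1.sub t2).sub t3).add (t4.const_smul ε)
  -- rhs of h4
  have hexp4 : ∀ n : ℕ, ContDiff ℝ n p₁ → ContDiff ℝ n p₂ →
      ContDiff ℝ n (fun t => Γ.mulVec (p₂ t) - p₁ t) := by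
    intro n hp1 hp2
    exact ((mvCLM Γ).contDiff.comp hp2).sub hp1
  -- rhs of h3, continuity only
  have hexp3 : ContDiff ℝ 0 (fun t =>
      (hessV V (q₁ t))ᵀ.mulVec (p₂ t) - ε • (jacF f (q₁ t) t)ᵀ.mulVec (p₂ t)) := by
    have tH : ContDiff ℝ 0 (fun t => (hessV V (q₁ t))ᵀ.mulVec (p₂ t)) := by
      apply contDiff_matVec _ hp2c0
      intro i j
      exact ((hessV_contDiff hV j i).of_le (by norm_num)).comp hq1c0
    have tJ : ContDiff ℝ 0 (fun t => (jacF f (q₁ t) t)ᵀ.mulVec (p₂ t)) := by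
      apply contDiff_matVec _ hp2c0
      intro i j
      exact ((jacF_contDiff hf j i).of_le (by norm_num)).comp (hq1c0.prodMk contDiff_id)
    exact tH.sub (tJ.const_smul ε)
  -- C¹ round
  have hq1c1 : ContDiff ℝ 1 q₁ := by
    rw [show (1 : WithTop ℕ∞) = 0 + 1 by norm_num, contDiff_succ_iff_deriv]
    exact ⟨hq1d, by simp, hderiv_q1 ▸ hq2c0⟩
  have hq2c1 : ContDiff ℝ 1 q₂ := by
    rw [show (1 : WithTop ℕ∞) = 0 + 1 by norm_num, contDiff_succ_iff_deriv]
    exact ⟨hq2d, by simp,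
      hderiv_q2 ▸ hexp 0 (by norm_num) hq1c0 hq2c0 hp2c0⟩
  have hp2c1 : ContDiff ℝ 1 p₂ := by
    rw [show (1 : WithTop ℕ∞) = 0 + 1 by norm_num, contDiff_succ_iff_deriv]
    exact ⟨hp2d, by simp, hderiv_p2 ▸ hexp4 0 hp1c0 hp2c0⟩
  have hp1c1 : ContDiff ℝ 1 p₁ := by
    rw [show (1 : WithTop ℕ∞) = 0 + 1 by norm_num, contDiff_succ_iff_deriv]
    refine ⟨hp1d, by simp, ?_⟩
    have : deriv p₁ = fun t =>
        (hessV V (q₁ t))ᵀ.mulVec (p₂ t) - ε • (jacF f (q₁ t) t)ᵀ.mulVec (p₂ t) :=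
      funext fun t => (h3 t).deriv
    rw [this]; exact hexp3
  -- C² round
  have hq1c2 : ContDiff ℝ 2 q₁ := by
    rw [show (2 : WithTop ℕ∞) = 1 + 1 by norm_num, contDiff_succ_iff_deriv]
    exact ⟨hq1d, by simp, hderiv_q1 ▸ hq2c1⟩
  have hp2c2 : ContDiff ℝ 2 p₂ := by
    rw [show (2 : WithTop ℕ∞) = 1 + 1 by norm_num, contDiff_succ_iff_deriv]
    exact ⟨hp2d, by simp, hderiv_p2 ▸ hexp4 1 hp1c1 hp2c1⟩
  have hq2c2 : ContDiff ℝ 2 q₂ := by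
    rw [show (2 : WithTop ℕ∞) = 1 + 1 by norm_num, contDiff_succ_iff_deriv]
    exact ⟨hq2d, by simp,
      hderiv_q2 ▸ hexp 1 (by norm_num) hq1c1 hq2c1 hp2c1⟩
  -- C³/C⁴ round
  have hq2c3 : ContDiff ℝ 3 q₂ := by
    rw [show (3 : WithTop ℕ∞) = 2 + 1 by norm_num, contDiff_succ_iff_deriv]
    exact ⟨hq2d, by simp,
      hderiv_q2 ▸ hexp 2 (by norm_num) hq1c2 hq2c2 hp2c2⟩
  have hq1c4 : ContDiff ℝ 4 q₁ := by
    rw [show (4 : WithTop ℕ∞) = 3 + 1 by norm_num, contDiff_succ_iff_deriv]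
    exact ⟨hq1d, by simp, hderiv_q1 ▸ hq2c3⟩
  refine ⟨hq1c4, ?_⟩
  -- invertibility and symmetry facts
  have hdet : IsUnit Γ.det := (Matrix.isUnit_iff_isUnit_det Γ).1 hΓ.isUnit
  have hinv : ∀ y, Γ⁻¹.mulVec (Γ.mulVec y) = y := by
    intro y
    rw [Matrix.mulVec_mulVec, Matrix.nonsing_inv_mul Γ hdet, Matrix.one_mulVec]
  have hinvsymm : (Γ⁻¹)ᵀ = Γ⁻¹ := by
    rw [Matrix.transpose_nonsing_inv, hΓsymm.eq]
  have hval : ∀ s, (Γ.mulVec (p₂ s) - Γ.mulVec (q₂ s) - gradV V (q₁ s) + ε • f (q₁ s) s)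
      + Γ.mulVec (q₂ s) + gradV V (q₁ s) - ε • f (q₁ s) s = Γ.mulVec (p₂ s) := by
    intro s; abel
  intro t
  rw [hderiv_q1, hderiv_q2]
  simp only []
  -- Claim A: the w-slot fderiv
  have claimA : ∀ s : ℝ, fderiv ℝ (fun w => FWLagrangian Γ V f ε s (q₁ s) (q₂ s) w)
      (Γ.mulVec (p₂ s) - Γ.mulVec (q₂ s) - gradV V (q₁ s) + ε • f (q₁ s) s)
      = dotCLM (p₂ s) := by
    intro s
    have hg : HasFDerivAt
        (fun w : Fin m → ℝ => w + Γ.mulVec (q₂ s) + gradV V (q₁ s) - ε • f (q₁ s) s)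
        (ContinuousLinearMap.id ℝ (Fin m → ℝ))
        (Γ.mulVec (p₂ s) - Γ.mulVec (q₂ s) - gradV V (q₁ s) + ε • f (q₁ s) s) :=
      (((hasFDerivAt_id _).add_const _).add_const _).sub_const _
    have h : fderiv ℝ (fun w => FWLagrangian Γ V f ε s (q₁ s) (q₂ s) w)
        (Γ.mulVec (p₂ s) - Γ.mulVec (q₂ s) - gradV V (q₁ s) + ε • f (q₁ s) s)
        = (dotCLM (Γ⁻¹.mulVec
            ((Γ.mulVec (p₂ s) - Γ.mulVec (q₂ s) - gradV V (q₁ s) + ε • f (q₁ s) s)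
              + Γ.mulVec (q₂ s) + gradV V (q₁ s) - ε • f (q₁ s) s))).comp
          (ContinuousLinearMap.id ℝ (Fin m → ℝ)) :=
      (hasFDerivAt_half_quad hinvsymm hg).fderiv
    rw [h, ContinuousLinearMap.comp_id, hval s, hinv]
  -- Claim B: the v-slot fderiv
  have claimB : ∀ s : ℝ, fderiv ℝ (fun v => FWLagrangian Γ V f ε s (q₁ s) v
      (Γ.mulVec (p₂ s) - Γ.mulVec (q₂ s) - gradV V (q₁ s) + ε • f (q₁ s) s)) (q₂ s)
      = dotCLM (Γ.mulVec (p₂ s)) := by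
    intro s
    have hg : HasFDerivAt
        (fun v : Fin m → ℝ =>
          (Γ.mulVec (p₂ s) - Γ.mulVec (q₂ s) - gradV V (q₁ s) + ε • f (q₁ s) s)
          + Γ.mulVec v + gradV V (q₁ s) - ε • f (q₁ s) s)
        (mvCLM Γ) (q₂ s) :=
      ((((mvCLM Γ).hasFDerivAt.const_add _).add_const _).sub_const _)
    have h : fderiv ℝ (fun v => FWLagrangian Γ V f ε s (q₁ s) v
        (Γ.mulVec (p₂ s) - Γ.mulVec (q₂ s) - gradV V (q₁ s) + ε • f (q₁ s) s)) (q₂ s)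
        = (dotCLM (Γ⁻¹.mulVec
            ((Γ.mulVec (p₂ s) - Γ.mulVec (q₂ s) - gradV V (q₁ s) + ε • f (q₁ s) s)
              + Γ.mulVec (q₂ s) + gradV V (q₁ s) - ε • f (q₁ s) s))).comp (mvCLM Γ) :=
      (hasFDerivAt_half_quad hinvsymm hg).fderiv
    rw [h, hval s, hinv, dotCLM_comp_mvCLM, hΓsymm.eq]
  -- Claim C: the x-slot fderiv
  have claimC : fderiv ℝ (fun u => FWLagrangian Γ V f ε t u (q₂ t)
      (Γ.mulVec (p₂ t) - Γ.mulVec (q₂ t) - gradV V (q₁ t) + ε • f (q₁ t) t)) (q₁ t)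
      = dotCLM ((hessV V (q₁ t))ᵀ.mulVec (p₂ t)
          - ε • (jacF f (q₁ t) t)ᵀ.mulVec (p₂ t)) := by
    have hg : HasFDerivAt
        (fun u : Fin m → ℝ =>
          (Γ.mulVec (p₂ t) - Γ.mulVec (q₂ t) - gradV V (q₁ t) + ε • f (q₁ t) t)
          + Γ.mulVec (q₂ t) + gradV V u - ε • f u t)
        (mvCLM (hessV V (q₁ t) - ε • jacF f (q₁ t) t)) (q₁ t) := by
      rw [mvCLM_sub_smul]
      exact ((hasFDerivAt_gradV hV (q₁ t)).const_add _).sub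
        ((hasFDerivAt_fslice hf t (q₁ t)).const_smul ε)
    have h : fderiv ℝ (fun u => FWLagrangian Γ V f ε t u (q₂ t)
        (Γ.mulVec (p₂ t) - Γ.mulVec (q₂ t) - gradV V (q₁ t) + ε • f (q₁ t) t)) (q₁ t)
        = (dotCLM (Γ⁻¹.mulVec
            ((Γ.mulVec (p₂ t) - Γ.mulVec (q₂ t) - gradV V (q₁ t) + ε • f (q₁ t) t)
              + Γ.mulVec (q₂ t) + gradV V (q₁ t) - ε • f (q₁ t) t))).comp
          (mvCLM (hessV V (q₁ t) - ε • jacF f (q₁ t) t)) :=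
      (hasFDerivAt_half_quad hinvsymm hg).fderiv
    rw [h, hval t, hinv, dotCLM_comp_mvCLM, Matrix.transpose_sub, Matrix.transpose_smul,
      Matrix.sub_mulVec, Matrix.smul_mulVec]
  rw [claimC, funext claimB, funext claimA]
  -- derivative of the v-term
  have hdB : deriv (fun s => dotCLM (Γ.mulVec (p₂ s))) t
      = dotCLM (Γ.mulVec (Γ.mulVec (p₂ t) - p₁ t)) := by
    have h : HasDerivAt (fun s => dotCLM (Γ.mulVec (p₂ s)))
        (dotCLM (Γ.mulVec (Γ.mulVec (p₂ t) - p₁ t))) t :=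
      (dotCLM.comp (mvCLM Γ)).hasFDerivAt.comp_hasDerivAt t (h4 t)
    exact h.deriv
  -- first derivative of the w-term
  have hdA1 : deriv (fun s => dotCLM (p₂ s))
      = fun s => dotCLM (Γ.mulVec (p₂ s) - p₁ s) := by
    funext s
    have h : HasDerivAt (fun s => dotCLM (p₂ s)) (dotCLM (Γ.mulVec (p₂ s) - p₁ s)) s :=
      dotCLM.hasFDerivAt.comp_hasDerivAt s (h4 s)
    exact h.deriv
  -- second derivative of the w-term
  have hdA2 : deriv (fun s => dotCLM (Γ.mulVec (p₂ s) - p₁ s)) t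
      = dotCLM (Γ.mulVec (Γ.mulVec (p₂ t) - p₁ t)
          - ((hessV V (q₁ t))ᵀ.mulVec (p₂ t) - ε • (jacF f (q₁ t) t)ᵀ.mulVec (p₂ t))) := by
    have hv : HasDerivAt (fun s => Γ.mulVec (p₂ s) - p₁ s)
        (Γ.mulVec (Γ.mulVec (p₂ t) - p₁ t)
          - ((hessV V (q₁ t))ᵀ.mulVec (p₂ t) - ε • (jacF f (q₁ t) t)ᵀ.mulVec (p₂ t))) t := by
      have h5 : HasDerivAt (fun s => Γ.mulVec (p₂ s)) (Γ.mulVec (Γ.mulVec (p₂ t) - p₁ t)) t :=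
        (mvCLM Γ).hasFDerivAt.comp_hasDerivAt t (h4 t)
      exact h5.sub (h3 t)
    exact (dotCLM.hasFDerivAt.comp_hasDerivAt t hv).deriv
  rw [hdB, hdA1, hdA2, ← map_sub, ← map_add]
  rw [show ((hessV V (q₁ t))ᵀ.mulVec (p₂ t) - ε • (jacF f (q₁ t) t)ᵀ.mulVec (p₂ t))
      - Γ.mulVec (Γ.mulVec (p₂ t) - p₁ t)
      + (Γ.mulVec (Γ.mulVec (p₂ t) - p₁ t)
          - ((hessV V (q₁ t))ᵀ.mulVec (p₂ t) - ε • (jacF f (q₁ t) t)ᵀ.mulVec (p₂ t)))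
      = 0 from by abel, map_zero]
end
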